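/- Inner join UA characterization: given lists l₁ (length ≤ n₁) and l₂ (length ≤ n₂) and a decidable join predicate φ, define the minimal UA matrix z with z_{i,j} = T iff i < length(l₁), j < length(l₂), and φ(l₁[i], l₂[j]) holds. Then the inner join output l₁ ⋈_φ l₂ (all pairs satisfying φ) has length equal to the number of T entries in z. -/
import Mathlib
theorem lfs {α : Type*} (l : List α) (p : α → Bool) :
    (l.filter p).length = (l.map fun a => if p a then 1 else 0).sum := by
  induction l with
  | nil => simp
  | cons a t ih => by_cases h : p a <;> simp [List.filter_cons, h, ih, Nat.add_comm]

theorem filt1 (α : Type*) (l : List α) (p : α → Bool) :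
    (l.filter p).length = (Finset.univ.filter (fun i : Fin l.length => p (l.get i))).card := by
  conv_lhs => rw [← List.map_get_finRange l, List.filter_map, List.length_map]
  rw [Finset.card_filter, ← List.toFinset_finRange (n := l.length),
    List.sum_toFinset _ (List.nodup_finRange _), lfs]
  simp [Function.comp]

theorem filt2 (α β : Type*) (l₁ : List α) (l₂ : List β) (p : α × β → Bool) :
    ((l₁.product l₂).filter p).length
      = (Finset.univ.filter (fun q : Fin l₁.length × Fin l₂.length =>
          p (l₁.get q.1, l₂.get q.2))).card := by
  rw [List.product, List.filter_flatMap, List.length_flatMap]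
  simp only [List.filter_map, List.length_map, Function.comp_def]
  have : ∀ a, (List.filter (fun b => p (a, b)) l₂).length
      = (Finset.univ.filter (fun j : Fin l₂.length => p (a, l₂.get j))).card := by
    intro a; exact filt1 β l₂ (fun b => p (a, b))
  simp only [this]
  conv_lhs => rw [← List.map_get_finRange l₁, List.map_map]
  rw [← Fin.sum_univ_def]
  rw [Finset.card_filter, Fintype.sum_prod_type]
  refine Finset.sum_congr rfl fun i _ => ?_
  rw [← Finset.card_filter]
  rfl



/-- Inner join UA characterization: with `z i j = T` iff input tuples `l₁[i]` and
`l₂[j]` both exist and satisfy the join predicate `φ`, the inner join output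
(all pairs satisfying `φ`, with multiplicity) has length equal to the number of
`T` entries of the matrix `z`. -/
theorem ijoin_ua_characterization (α β : Type*) (n₁ n₂ : ℕ)
    (l₁ : List α) (l₂ : List β) (h₁ : l₁.length ≤ n₁) (h₂ : l₂.length ≤ n₂)
    (φ : α → β → Prop) [∀ a b, Decidable (φ a b)]
    (z : Fin n₁ → Fin n₂ → Bool)
    (hz : ∀ (i : Fin n₁) (j : Fin n₂), z i j = true ↔
      ∃ (hi : (i : ℕ) < l₁.length) (hj : (j : ℕ) < l₂.length),
        φ (l₁.get ⟨i, hi⟩) (l₂.get ⟨j, hj⟩)) :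
    ((l₁.product l₂).filter (fun p => decide (φ p.1 p.2))).length
      = (Finset.univ.filter
          (fun p : Fin n₁ × Fin n₂ => z p.1 p.2 = true)).card := by
  rw [filt2]
  refine Finset.card_bij (fun q _ => (Fin.castLE h₁ q.1, Fin.castLE h₂ q.2)) ?_ ?_ ?_
  · intro q hq
    simp only [Finset.mem_filter, Finset.mem_univ, true_and, decide_eq_true_iff] at hq ⊢
    rw [hz]
    exact ⟨q.1.isLt, q.2.isLt, hq⟩
  · intro a ha b hb h
    have h1 : (a.1 : ℕ) = b.1 := congrArg (fun p => (p.1 : ℕ)) h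
    have h2 : (a.2 : ℕ) = b.2 := congrArg (fun p => (p.2 : ℕ)) h
    exact Prod.ext (Fin.ext h1) (Fin.ext h2)
  · intro p hp
    simp only [Finset.mem_filter, Finset.mem_univ, true_and] at hp
    obtain ⟨hi, hj, hφ⟩ := (hz p.1 p.2).mp hp
    refine ⟨(⟨p.1, hi⟩, ⟨p.2, hj⟩), ?_, ?_⟩
    · simp only [Finset.mem_filter, Finset.mem_univ, true_and, decide_eq_true_iff]
      exact hφ
    · exact Prod.ext (Fin.ext rfl) (Fin.ext rfl)
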